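/- arXiv:2502.16997 — 2 statements merged into one kernel-verified Lean document; each statement's English description precedes it below -/
import Mathlib

section
/- For every set 𝒜 of subsets of a finite nonempty set I, one has Γ_𝒜 = [𝒜]: the set of subsets B ⊆ I all of whose dissociations are contested by some member of 𝒜 is exactly the integral connectivity structure generated by 𝒜. -/
universe u

variable {I : Type u}

/-- `{J₁, J₂}` is a dissociation of `J ⊆ I`: an (unordered) pair of nonempty
disjoint subsets whose union is `J`. -/
def IsDissociation (J J1 J2 : Set I) : Prop :=
  J1.Nonempty ∧ J2.Nonempty ∧ Disjoint J1 J2 ∧ J1 ∪ J2 = J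

/-- `A` contests the dissociation `{J₁, J₂}`. -/
def Contests (A J1 J2 : Set I) : Prop :=
  A ⊆ J1 ∪ J2 ∧ (A ∩ J1).Nonempty ∧ (A ∩ J2).Nonempty

/-- An integral connectivity structure on `I`. -/
def IsConnectivity (𝒦 : Set (Set I)) : Prop :=
  ∅ ∈ 𝒦 ∧ (∀ i : I, ({i} : Set I) ∈ 𝒦) ∧
    ∀ K L : Set I, K ∈ 𝒦 → L ∈ 𝒦 → (K ∩ L).Nonempty → K ∪ L ∈ 𝒦

/-- The integral connectivity structure generated by `𝒜`. -/
def generated (𝒜 : Set (Set I)) : Set (Set I) :=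
  ⋂₀ {𝒦 : Set (Set I) | IsConnectivity 𝒦 ∧ 𝒜 ⊆ 𝒦}

/-- The set `𝒦̃` of irreducible members of `𝒦` with at least two elements. -/
def irred (𝒦 : Set (Set I)) : Set (Set I) :=
  {K | K ∈ 𝒦 ∧ K ∉ generated (𝒦 \ {K}) ∧ 2 ≤ K.ncard}

/-- The sum of two integral connectivity structures: `𝒦₁ ⊕ 𝒦₂ = [𝒦₁ ∪ 𝒦₂]`. -/
def csum (𝒦₁ 𝒦₂ : Set (Set I)) : Set (Set I) := generated (𝒦₁ ∪ 𝒦₂)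

/-- The discrete integral connectivity structure on `I`. -/
def discreteStructure (I : Type u) : Set (Set I) :=
  {(∅ : Set I)} ∪ {A : Set I | ∃ i : I, A = {i}}

/-- `C` is a connected component of `(I, 𝒦)`: a maximal member of `𝒦`. -/
def IsComponent (𝒦 : Set (Set I)) (C : Set I) : Prop :=
  C ∈ 𝒦 ∧ ∀ K ∈ 𝒦, C ⊆ K → K = C

/-- `Γ_𝒜`: subsets of `I` all of whose dissociations are contested by a member of `𝒜`. -/
def Gamma (𝒜 : Set (Set I)) : Set (Set I) :=
  {B | ∀ J1 J2 : Set I, IsDissociation B J1 J2 → ∃ A ∈ 𝒜, Contests A J1 J2}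

/-- A random family on `I`: a finite probability space together with finitely
valued random variables indexed by `I`. -/
structure RandomFamily (I : Type u) where
  Ω : Type
  [fintΩ : Fintype Ω]
  P : Ω → ℝ
  P_nonneg : ∀ ω, 0 ≤ P ω
  P_total : ∑ ω, P ω = 1
  R : I → Type
  [fintR : ∀ i, Fintype (R i)]
  X : ∀ i, Ω → R i

attribute [instance] RandomFamily.fintΩ RandomFamily.fintR

/-- Probability of an event. -/
noncomputable def RandomFamily.prob (φ : RandomFamily I) (E : Set φ.Ω) : ℝ :=
  ∑ ω, E.indicator φ.P ω

/-- `P(X_J = x_J)`. -/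
noncomputable def RandomFamily.probEq (φ : RandomFamily I) (J : Set I)
    (x : ∀ i, φ.R i) : ℝ :=
  φ.prob {ω | ∀ j ∈ J, φ.X j ω = x j}

/-- `φ` respects the dissociation `{J₁, J₂}`:
`P(X_{J₁∪J₂} = x) = P(X_{J₁} = x) · P(X_{J₂} = x)` for all tuples of values. -/
def RandomFamily.Respects (φ : RandomFamily I) (J1 J2 : Set I) : Prop :=
  ∀ x : ∀ i, φ.R i, φ.probEq (J1 ∪ J2) x = φ.probEq J1 x * φ.probEq J2 x

/-- The connectivity structure `K_φ` of a random family: the subsets `J ⊆ I`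
such that `φ` contests every dissociation of `J`. -/
def RandomFamily.Kconn (φ : RandomFamily I) : Set (Set I) :=
  {J | ∀ J1 J2 : Set I, IsDissociation J J1 J2 → ¬ φ.Respects J1 J2}

/-- Tensor product of two random families. -/
noncomputable def RandomFamily.tensor (φ ψ : RandomFamily I) : RandomFamily I where
  Ω := φ.Ω × ψ.Ω
  fintΩ := inferInstance
  P := fun p => φ.P p.1 * ψ.P p.2
  P_nonneg := fun p => mul_nonneg (φ.P_nonneg _) (ψ.P_nonneg _)
  P_total := by
    rw [Fintype.sum_prod_type]
    simp only [← Finset.mul_sum]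
    rw [ψ.P_total]
    simp only [mul_one]
    exact φ.P_total
  R := fun i => φ.R i × ψ.R i
  fintR := fun i => inferInstance
  X := fun i p => (φ.X i p.1, ψ.X i p.2)

/-- Restriction of a random family to a subset `J ⊆ I`. -/
def RandomFamily.restrict (φ : RandomFamily I) (J : Set I) : RandomFamily J where
  Ω := φ.Ω
  fintΩ := inferInstance
  P := φ.P
  P_nonneg := φ.P_nonneg
  P_total := φ.P_total
  R := fun j => φ.R (j : I)
  fintR := fun j => inferInstance
  X := fun j => φ.X (j : I)

/-- The canonical `M`-brunnian family on `I`, for `M` of cardinality `m`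
(with elements listed in increasing order). -/
noncomputable def brunnian [LinearOrder I] (M : Finset I) (m : ℕ) (h : M.card = m) :
    RandomFamily I where
  Ω := Fin (m - 1) → ZMod 2
  fintΩ := inferInstance
  P := fun _ => ((2 : ℝ) ^ (m - 1))⁻¹
  P_nonneg := fun _ => by positivity
  P_total := by
    have hcard : Fintype.card (Fin (m - 1) → ZMod 2) = 2 ^ (m - 1) := by
      rw [Fintype.card_fun]
      simp
    rw [Finset.sum_const, Finset.card_univ, hcard, nsmul_eq_mul]
    push_cast
    exact mul_inv_cancel₀ (by positivity)
  R := fun _ => ZMod 2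
  fintR := fun _ => inferInstance
  X := fun i ω =>
    if hi : i ∈ M then
      if hk : (((M.orderIsoOfFin h).symm ⟨i, hi⟩ : Fin m) : ℕ) < m - 1 then
        ω ⟨_, hk⟩
      else ∑ j, ω j
    else 0
/-!
`[𝒜] ⊆ Γ_𝒜` because `Γ_𝒜` is itself an integral connectivity structure containing `𝒜`: a
dissociation `{J₁, J₂}` of `K ∪ L` splits `K` or `L` (the two meet), and a member of `𝒜`
contesting that split contests `{J₁, J₂}`. Conversely, for `B ∈ Γ_𝒜` finite and `b ∈ B`, take a
maximal `M ∈ [𝒜]` with `b ∈ M ⊆ B`; if `M ≠ B`, a member `A ∈ 𝒜` contesting `{M, B \ M}` gives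
the larger `A ∪ M ∈ [𝒜]`.
-/

section

variable {𝒜 : Set (Set I)}

lemma isConnectivity_generated (𝒜 : Set (Set I)) : IsConnectivity (generated 𝒜) :=
  ⟨fun _ h𝒦 => h𝒦.1.1, fun i _ h𝒦 => h𝒦.1.2.1 i,
    fun K L hK hL hKL 𝒦 h𝒦 => h𝒦.1.2.2 K L (hK 𝒦 h𝒦) (hL 𝒦 h𝒦) hKL⟩

lemma subset_generated (𝒜 : Set (Set I)) : 𝒜 ⊆ generated 𝒜 :=
  fun _ hA _ h𝒦 => h𝒦.2 hA

lemma generated_subset {𝒦 : Set (Set I)} (h𝒦 : IsConnectivity 𝒦) (h : 𝒜 ⊆ 𝒦) :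
    generated 𝒜 ⊆ 𝒦 :=
  Set.sInter_subset_of_mem ⟨h𝒦, h⟩

lemma IsDissociation.symm {J J1 J2 : Set I} (h : IsDissociation J J1 J2) :
    IsDissociation J J2 J1 :=
  ⟨h.2.1, h.1, h.2.2.1.symm, Set.union_comm J1 J2 ▸ h.2.2.2⟩

lemma IsDissociation.nontrivial {J J1 J2 : Set I} (h : IsDissociation J J1 J2) :
    J.Nontrivial := by
  obtain ⟨⟨x, hx⟩, ⟨y, hy⟩, hd, rfl⟩ := h
  exact ⟨x, Or.inl hx, y, Or.inr hy, fun hxy => Set.disjoint_left.1 hd hx (hxy ▸ hy)⟩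

lemma Contests.symm {A J1 J2 : Set I} (h : Contests A J1 J2) : Contests A J2 J1 :=
  ⟨Set.union_comm J1 J2 ▸ h.1, h.2.2, h.2.1⟩

lemma Contests.mono {A J1 J2 J1' J2' : Set I} (h : Contests A J1 J2) (h1 : J1 ⊆ J1')
    (h2 : J2 ⊆ J2') : Contests A J1' J2' :=
  ⟨h.1.trans (Set.union_subset_union h1 h2), h.2.1.mono (Set.inter_subset_inter_right A h1),
    h.2.2.mono (Set.inter_subset_inter_right A h2)⟩

lemma exists_contests_of_mem_gamma {K J1 J2 : Set I} (hK : K ∈ Gamma 𝒜) (hd : Disjoint J1 J2)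
    (hKJ : K ⊆ J1 ∪ J2) (h1 : (K ∩ J1).Nonempty) (h2 : (K ∩ J2).Nonempty) :
    ∃ A ∈ 𝒜, Contests A J1 J2 := by
  have hdis : IsDissociation K (K ∩ J1) (K ∩ J2) :=
    ⟨h1, h2, hd.mono Set.inter_subset_right Set.inter_subset_right,
      by rw [← Set.inter_union_distrib_left, Set.inter_eq_left.2 hKJ]⟩
  obtain ⟨A, hA, hcon⟩ := hK _ _ hdis
  exact ⟨A, hA, hcon.mono Set.inter_subset_right Set.inter_subset_right⟩

lemma union_mem_gamma {K L : Set I} (hK : K ∈ Gamma 𝒜) (hL : L ∈ Gamma 𝒜)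
    (hKL : (K ∩ L).Nonempty) : K ∪ L ∈ Gamma 𝒜 := by
  obtain ⟨z, hzK, hzL⟩ := hKL
  suffices key : ∀ J1 J2, IsDissociation (K ∪ L) J1 J2 → z ∈ J1 → ∃ A ∈ 𝒜, Contests A J1 J2 by
    intro J1 J2 hdis
    rcases (hdis.2.2.2.symm ▸ Or.inl hzK : z ∈ J1 ∪ J2) with hz | hz
    · exact key J1 J2 hdis hz
    · obtain ⟨A, hA, hcon⟩ := key J2 J1 hdis.symm hz
      exact ⟨A, hA, hcon.symm⟩
  rintro J1 J2 ⟨-, ⟨y, hy⟩, hd, hu⟩ hz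
  rcases (hu ▸ Or.inr hy : y ∈ K ∪ L) with hyK | hyL
  · exact exists_contests_of_mem_gamma hK hd (hu ▸ Set.subset_union_left)
      ⟨z, hzK, hz⟩ ⟨y, hyK, hy⟩
  · exact exists_contests_of_mem_gamma hL hd (hu ▸ Set.subset_union_right)
      ⟨z, hzL, hz⟩ ⟨y, hyL, hy⟩

lemma isConnectivity_gamma (𝒜 : Set (Set I)) : IsConnectivity (Gamma 𝒜) :=
  ⟨fun _ _ h => absurd h.nontrivial Set.not_nontrivial_empty,
    fun _ _ _ h => absurd h.nontrivial Set.not_nontrivial_singleton,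
    fun _ _ hK hL hKL => union_mem_gamma hK hL hKL⟩

lemma subset_gamma (𝒜 : Set (Set I)) : 𝒜 ⊆ Gamma 𝒜 := by
  rintro A hA J1 J2 ⟨h1, h2, -, rfl⟩
  exact ⟨_, hA, subset_rfl, by rwa [Set.union_inter_cancel_left],
    by rwa [Set.union_inter_cancel_right]⟩

lemma generated_subset_gamma (𝒜 : Set (Set I)) : generated 𝒜 ⊆ Gamma 𝒜 :=
  generated_subset (isConnectivity_gamma 𝒜) (subset_gamma 𝒜)

lemma mem_generated_of_mem_gamma {B : Set I} (hfin : B.Finite) (hB : B ∈ Gamma 𝒜) :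
    B ∈ generated 𝒜 := by
  rcases B.eq_empty_or_nonempty with rfl | ⟨b, hb⟩
  · exact (isConnectivity_generated 𝒜).1
  set S : Set (Set I) := {K | K ∈ generated 𝒜 ∧ K ⊆ B ∧ b ∈ K}
  have hSfin : S.Finite := hfin.finite_subsets.subset fun _ hK => hK.2.1
  obtain ⟨M, hM⟩ := hSfin.exists_maximal ⟨{b}, (isConnectivity_generated 𝒜).2.1 b,
    Set.singleton_subset_iff.2 hb, rfl⟩
  obtain ⟨hMgen, hMB, hbM⟩ := hM.prop
  by_contra hBM
  have hdis : IsDissociation B M (B \ M) :=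
    ⟨⟨b, hbM⟩, Set.sdiff_nonempty.2 fun h => hBM (Set.Subset.antisymm hMB h ▸ hMgen),
      Set.disjoint_sdiff_right, Set.union_sdiff_cancel hMB⟩
  obtain ⟨A, hA, hAsub, hAM, ⟨x, hxA, -, hxM⟩⟩ := hB _ _ hdis
  have hAM_mem : A ∪ M ∈ S :=
    ⟨(isConnectivity_generated 𝒜).2.2 A M (subset_generated 𝒜 hA) hMgen hAM,
      Set.union_subset (Set.union_sdiff_cancel hMB ▸ hAsub) hMB, Or.inr hbM⟩
  exact hxM (hM.eq_of_subset hAM_mem Set.subset_union_right ▸ Or.inl hxA)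

end

theorem stmt4_general {I : Type u} [Fintype I] (𝒜 : Set (Set I)) :
    Gamma 𝒜 = generated 𝒜 :=
  Set.Subset.antisymm (fun _ hB => mem_generated_of_mem_gamma (Set.toFinite _) hB)
    (generated_subset_gamma 𝒜)

/-- for every set `𝒜` of subsets of a finite nonempty set `I`,
`Γ_𝒜 = [𝒜]`, the integral connectivity structure generated by `𝒜`. -/
theorem stmt4 {I : Type u} [Fintype I] [Nonempty I] (𝒜 : Set (Set I)) :
    Gamma 𝒜 = generated 𝒜 :=
  stmt4_general 𝒜
end

section
/- Let 𝒦₁ and 𝒦₂ be integral connectivity structures on a finite nonempty set I, and let φ, ψ be random families on I with 𝒦₁ ⊆ K_φ ⊆ 𝒦₂ and 𝒦₁ ⊆ K_ψ ⊆ 𝒦₂. Then 𝒦₁ ⊆ K_{φ⊗ψ} ⊆ 𝒦₂. -/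
universe u

variable {I : Type u}

/-!
If `φ ⊗ ψ` respects a dissociation `{J₁, J₂}`, the joint law of `(X_{J₁}, X_{J₂})` under the
product factors as `a(x, x') c(y, y') = b(x, x') d(y, y')`, where `a` is the joint law and `b` the
product of the marginals for `φ`, and `c`, `d` likewise for `ψ`. Summing over `(y, y')`, where `c`
and `d` have the same nonzero total, gives `a = b`: `φ` respects `{J₁, J₂}`. Hence
`𝒦₁ ⊆ K_φ ⊆ K_{φ⊗ψ}`.

If `φ ⊗ ψ` contests `{J₁, J₂}`, then one factor, say `φ`, does. Take `B ⊆ J₁ ∪ J₂` minimal such that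
`φ` contests `{B ∩ J₁, B ∩ J₂}`. Then `B` contests `{J₁, J₂}`, and `B ∈ K_φ`: if `φ` respected a
dissociation `{B₁, B₂}` of `B`, independence of `X_{B₁}` and `X_{B₂}` would pass to the pieces
`B_k ∩ J_l`, and minimality would make `φ` respect `{B ∩ J₁, B ∩ J₂}`. So every dissociation of a
member of `K_{φ⊗ψ}` is contested by a member of `K_φ ∪ K_ψ ⊆ 𝒦₂`, and an integral connectivity
structure contains every set with this property.
-/

open scoped Classical
open Finset

lemma IsConnectivity.gamma_subset {I : Type u} [Finite I] {𝒦 : Set (Set I)}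
    (h𝒦 : IsConnectivity 𝒦) : Gamma 𝒦 ⊆ 𝒦 := by
  intro J hJ
  obtain rfl | ⟨i, hi⟩ := J.eq_empty_or_nonempty
  · exact h𝒦.1
  obtain ⟨K, hiK, hK⟩ := Finite.exists_le_maximal (p := fun K => K ∈ 𝒦 ∧ K ⊆ J) (a := {i})
    ⟨h𝒦.2.1 i, Set.singleton_subset_iff.mpr hi⟩
  obtain ⟨hK𝒦, hKJ⟩ := hK.prop
  by_contra hJ𝒦
  obtain ⟨A, hA, hAJ, hAK, a, haA, -, haK⟩ := hJ K (J \ K)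
    ⟨⟨i, hiK rfl⟩, Set.sdiff_nonempty.mpr fun h => hJ𝒦 (hKJ.antisymm h ▸ hK𝒦),
      Set.disjoint_sdiff_right, Set.union_sdiff_cancel hKJ⟩
  rw [Set.union_sdiff_cancel hKJ] at hAJ
  have hKA : K ∪ A ∈ 𝒦 := h𝒦.2.2 K A hK𝒦 hA (by rwa [Set.inter_comm])
  have := hK.eq_of_subset ⟨hKA, Set.union_subset hKJ hAJ⟩ Set.subset_union_left
  exact haK (this ▸ Set.mem_union_right K haA)

lemma eq_of_forall_mul_eq_mul {α β S : Type*} [Fintype β] [CommSemiring S] [IsCancelMulZero S]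
    {f g : α → S} {c d : β → S} (h : ∀ a b, f a * c b = g a * d b)
    (hcd : ∑ b, c b = ∑ b, d b) (hc : ∑ b, c b ≠ 0) : f = g := by
  funext a
  refine mul_right_cancel₀ hc ?_
  rw [mul_sum, sum_congr rfl fun b _ => h a b, ← mul_sum, hcd]

section AgreeOn

variable {I : Type u} [Fintype I] {R : I → Type} [∀ i, Fintype (R i)]

/-- Marginals are computed by summing over full tuples rather than over tuples indexed by a subset;
the resulting overcount `#(agreeOn B w)` does not depend on `w`. -/
noncomputable def agreeOn (B : Set I) (w : ∀ i, R i) : Finset (∀ i, R i) :=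
  Fintype.piFinset fun i => if i ∈ B then {w i} else univ

@[simp]
lemma mem_agreeOn {B : Set I} {w u : ∀ i, R i} : u ∈ agreeOn B w ↔ ∀ i ∈ B, u i = w i := by
  simp only [agreeOn, Fintype.mem_piFinset]
  refine forall_congr' fun i => ?_
  split_ifs with hi <;> simp [hi]

lemma self_mem_agreeOn (B : Set I) (w : ∀ i, R i) : w ∈ agreeOn B w := by
  simp

lemma agreeOn_empty (w : ∀ i, R i) : agreeOn ∅ w = univ := by
  ext; simp

lemma card_agreeOn (B : Set I) (w : ∀ i, R i) :
    #(agreeOn B w) = ∏ i, if i ∈ B then 1 else Fintype.card (R i) := by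
  rw [agreeOn, Fintype.card_piFinset]
  exact prod_congr rfl fun i _ => by split_ifs <;> simp

lemma card_agreeOn_ne_zero (B : Set I) (w : ∀ i, R i) : #(agreeOn B w) ≠ 0 :=
  card_ne_zero_of_mem (self_mem_agreeOn B w)

lemma sum_agreeOn_indicator {C B : Set I} (hCB : C ⊆ B) (x w : ∀ i, R i) :
    ∑ u ∈ agreeOn C x, (if w ∈ agreeOn B u then (1 : ℝ) else 0) =
      if w ∈ agreeOn C x then (#(agreeOn B x) : ℝ) else 0 := by
  rw [sum_boole]
  split_ifs with hw
  · have : {u ∈ agreeOn C x | w ∈ agreeOn B u} = agreeOn B w := by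
      ext u
      simp only [mem_filter, mem_agreeOn] at hw ⊢
      exact ⟨fun h i hi => (h.2 i hi).symm, fun h =>
        ⟨fun i hi => (h i (hCB hi)).trans (hw i hi), fun i hi => (h i hi).symm⟩⟩
    rw [this, card_agreeOn, card_agreeOn]
  · rw [filter_false_of_mem, card_empty, Nat.cast_zero]
    intro u hu hwu
    simp only [mem_agreeOn] at hu hwu hw
    exact hw fun i hi => (hwu i (hCB hi)).trans (hu i hi)

end AgreeOn

namespace RandomFamily

variable {I : Type u} (φ ψ : RandomFamily I)

noncomputable def probEq₂ (J1 J2 : Set I) (x y : ∀ i, φ.R i) : ℝ :=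
  φ.prob {ω | (∀ j ∈ J1, φ.X j ω = x j) ∧ ∀ j ∈ J2, φ.X j ω = y j}

lemma nonempty_Ω : Nonempty φ.Ω := by
  by_contra h
  have := φ.P_total
  simp [not_nonempty_iff.mp h] at this

lemma prob_eq_sum (E : Set φ.Ω) : φ.prob E = ∑ ω, φ.P ω * if ω ∈ E then 1 else 0 := by
  simp [prob, Set.indicator_apply]

lemma probEq_union (J1 J2 : Set I) (x : ∀ i, φ.R i) :
    φ.probEq (J1 ∪ J2) x = φ.probEq₂ J1 J2 x x := by
  simp only [probEq, probEq₂, Set.mem_union, or_imp, forall_and]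

lemma probEq_congr {J : Set I} {x x' : ∀ i, φ.R i} (h : ∀ j ∈ J, x j = x' j) :
    φ.probEq J x = φ.probEq J x' := by
  simp only [probEq]
  congr 1
  ext ω
  exact forall₂_congr fun j hj => by rw [h j hj]

lemma probEq₂_congr {J1 J2 : Set I} {x x' y y' : ∀ i, φ.R i} (hx : ∀ j ∈ J1, x j = x' j)
    (hy : ∀ j ∈ J2, y j = y' j) : φ.probEq₂ J1 J2 x y = φ.probEq₂ J1 J2 x' y' := by
  simp only [probEq₂]
  congr 1
  ext ω
  exact and_congr (forall₂_congr fun j hj => by rw [hx j hj])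
    (forall₂_congr fun j hj => by rw [hy j hj])

lemma tensor_X_eq_iff {j : I} {p : (φ.tensor ψ).Ω} {a : φ.R j} {b : ψ.R j} :
    (φ.tensor ψ).X j p = (a, b) ↔ φ.X j p.1 = a ∧ ψ.X j p.2 = b :=
  Prod.ext_iff

lemma tensor_prob_prod (E : Set φ.Ω) (F : Set ψ.Ω) :
    (φ.tensor ψ).prob {p | p.1 ∈ E ∧ p.2 ∈ F} = φ.prob E * ψ.prob F := by
  simp only [prob_eq_sum, sum_mul_sum, ← Fintype.sum_prod_type']
  refine sum_congr rfl fun p _ => ?_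
  simp only [Set.mem_ofPred_eq]
  change φ.P p.1 * ψ.P p.2 * _ = _
  by_cases hE : p.1 ∈ E <;> by_cases hF : p.2 ∈ F <;> simp [hE, hF]

lemma tensor_probEq (J : Set I) (x : ∀ i, φ.R i) (y : ∀ i, ψ.R i) :
    (φ.tensor ψ).probEq J (fun i => (x i, y i)) = φ.probEq J x * ψ.probEq J y := by
  simp only [probEq]
  rw [← tensor_prob_prod]
  congr 1
  ext p
  simp only [Set.mem_ofPred_eq, tensor_X_eq_iff, forall_and]

lemma tensor_probEq₂ (J1 J2 : Set I) (x x' : ∀ i, φ.R i) (y y' : ∀ i, ψ.R i) :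
    (φ.tensor ψ).probEq₂ J1 J2 (fun i => (x i, y i)) (fun i => (x' i, y' i)) =
      φ.probEq₂ J1 J2 x x' * ψ.probEq₂ J1 J2 y y' := by
  simp only [probEq₂]
  rw [← tensor_prob_prod]
  congr 1
  ext p
  simp only [Set.mem_ofPred_eq, tensor_X_eq_iff, forall_and, and_and_and_comm]

section Respects

variable {φ ψ}

lemma Respects.symm {J1 J2 : Set I} (h : φ.Respects J1 J2) : φ.Respects J2 J1 := fun x => by
  rw [Set.union_comm, h, mul_comm]

lemma Respects.tensor {J1 J2 : Set I} (hφ : φ.Respects J1 J2) (hψ : ψ.Respects J1 J2) :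
    (φ.tensor ψ).Respects J1 J2 := by
  intro z
  obtain ⟨x, y, rfl⟩ : ∃ (x : ∀ i, φ.R i) (y : ∀ i, ψ.R i), z = fun i => (x i, y i) :=
    ⟨_, _, rfl⟩
  rw [tensor_probEq, tensor_probEq, tensor_probEq, hφ, hψ]
  ring

lemma respects_iff_probEq₂ {J1 J2 : Set I} (hJ : Disjoint J1 J2) :
    φ.Respects J1 J2 ↔ ∀ x y, φ.probEq₂ J1 J2 x y = φ.probEq J1 x * φ.probEq J2 y := by
  refine ⟨fun h x y => ?_, fun h x => by rw [probEq_union, h]⟩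
  have hx : ∀ j ∈ J1, x j = J1.piecewise x y j := fun j hj =>
    (Set.piecewise_eq_of_mem _ _ _ hj).symm
  have hy : ∀ j ∈ J2, y j = J1.piecewise x y j := fun j hj =>
    (Set.piecewise_eq_of_notMem _ _ _ (Set.disjoint_right.mp hJ hj)).symm
  rw [probEq₂_congr φ hx hy, ← probEq_union, h, probEq_congr φ hx, probEq_congr φ hy]

end Respects

variable [Fintype I]

lemma probEq_eq_sum (J : Set I) (x : ∀ i, φ.R i) :
    φ.probEq J x = ∑ ω, φ.P ω * if (φ.X · ω) ∈ agreeOn J x then 1 else 0 := by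
  simp [probEq, prob_eq_sum]

lemma probEq₂_eq_sum (J1 J2 : Set I) (x y : ∀ i, φ.R i) :
    φ.probEq₂ J1 J2 x y = ∑ ω, φ.P ω * ((if (φ.X · ω) ∈ agreeOn J1 x then 1 else 0) *
      if (φ.X · ω) ∈ agreeOn J2 y then 1 else 0) := by
  simp only [probEq₂, prob_eq_sum, Set.mem_ofPred_eq, mem_agreeOn, ite_zero_mul_ite_zero, one_mul]
  -- the two sides differ only in their `Decidable` instances
  convert rfl

lemma probEq_empty (x : ∀ i, φ.R i) : φ.probEq ∅ x = 1 := by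
  simp [probEq_eq_sum, φ.P_total]

lemma probEq₂_empty (x y : ∀ i, φ.R i) : φ.probEq₂ ∅ ∅ x y = 1 := by
  simp [probEq₂_eq_sum, φ.P_total]

lemma respects_empty (J : Set I) : φ.Respects ∅ J := by
  intro x
  rw [Set.empty_union, probEq_empty, one_mul]

lemma sum_probEq_agreeOn {C B : Set I} (hCB : C ⊆ B) (x : ∀ i, φ.R i) :
    ∑ u ∈ agreeOn C x, φ.probEq B u = #(agreeOn B x) * φ.probEq C x := by
  simp only [probEq_eq_sum, mul_sum]
  rw [sum_comm]
  refine sum_congr rfl fun ω _ => ?_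
  rw [← mul_sum, sum_agreeOn_indicator hCB]
  split_ifs <;> ring

lemma sum_probEq₂_agreeOn {C1 C2 B1 B2 : Set I} (h1 : C1 ⊆ B1) (h2 : C2 ⊆ B2)
    (x : ∀ i, φ.R i) :
    ∑ u ∈ agreeOn C1 x, ∑ v ∈ agreeOn C2 x, φ.probEq₂ B1 B2 u v =
      #(agreeOn B1 x) * #(agreeOn B2 x) * φ.probEq₂ C1 C2 x x := by
  simp only [probEq₂_eq_sum, mul_sum]
  conv_lhs => enter [2, u]; rw [sum_comm]
  rw [sum_comm]
  refine sum_congr rfl fun ω _ => ?_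
  trans φ.P ω * ((∑ u ∈ agreeOn C1 x, if (φ.X · ω) ∈ agreeOn B1 u then 1 else 0) *
    ∑ v ∈ agreeOn C2 x, if (φ.X · ω) ∈ agreeOn B2 v then 1 else 0)
  · simp_rw [sum_mul_sum, mul_sum]
  rw [sum_agreeOn_indicator h1, sum_agreeOn_indicator h2]
  split_ifs <;> ring

lemma sum_probEq (J : Set I) (w : ∀ i, φ.R i) : ∑ u, φ.probEq J u = #(agreeOn J w) := by
  rw [← agreeOn_empty w, φ.sum_probEq_agreeOn (Set.empty_subset J), probEq_empty, mul_one]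

lemma sum_probEq₂ (J1 J2 : Set I) (w : ∀ i, φ.R i) :
    ∑ u, ∑ v, φ.probEq₂ J1 J2 u v = #(agreeOn J1 w) * #(agreeOn J2 w) := by
  rw [← agreeOn_empty w, φ.sum_probEq₂_agreeOn (Set.empty_subset J1) (Set.empty_subset J2),
    probEq₂_empty, mul_one]

variable {φ ψ}

lemma Respects.mono {B1 B2 C1 C2 : Set I} (h : φ.Respects B1 B2) (hB : Disjoint B1 B2)
    (h1 : C1 ⊆ B1) (h2 : C2 ⊆ B2) : φ.Respects C1 C2 := by
  intro x
  have hN : (#(agreeOn B1 x) * #(agreeOn B2 x) : ℝ) ≠ 0 := by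
    exact_mod_cast mul_ne_zero (card_agreeOn_ne_zero B1 x) (card_agreeOn_ne_zero B2 x)
  refine mul_left_cancel₀ hN ?_
  calc _ = ∑ u ∈ agreeOn C1 x, ∑ v ∈ agreeOn C2 x, φ.probEq₂ B1 B2 u v := by
        rw [sum_probEq₂_agreeOn φ h1 h2, probEq_union]
    _ = (∑ u ∈ agreeOn C1 x, φ.probEq B1 u) * ∑ v ∈ agreeOn C2 x, φ.probEq B2 v := by
        simp_rw [(respects_iff_probEq₂ hB).mp h, sum_mul_sum]
    _ = _ := by
        rw [sum_probEq_agreeOn φ h1, sum_probEq_agreeOn φ h2]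
        ring

lemma Respects.union_union {C1 D1 C2 D2 : Set I} (h : φ.Respects (C1 ∪ D1) (C2 ∪ D2))
    (hd : Disjoint (C1 ∪ D1) (C2 ∪ D2)) (h1 : φ.Respects C1 D1) (h2 : φ.Respects C2 D2) :
    φ.Respects (C1 ∪ C2) (D1 ∪ D2) := by
  intro x
  have hC := h.mono hd Set.subset_union_left Set.subset_union_left x
  have hD := h.mono hd Set.subset_union_right Set.subset_union_right x
  rw [Set.union_union_union_comm, h x, h1 x, h2 x, hC, hD]
  ring

lemma Respects.of_tensor_left {J1 J2 : Set I} (h : (φ.tensor ψ).Respects J1 J2)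
    (hJ : Disjoint J1 J2) : φ.Respects J1 J2 := by
  rw [respects_iff_probEq₂ hJ] at h ⊢
  obtain ⟨ξ⟩ := ψ.nonempty_Ω
  have hsum := ψ.sum_probEq₂ J1 J2 (ψ.X · ξ)
  have hfactor : ∀ (x : (∀ i, φ.R i) × (∀ i, φ.R i)) (y : (∀ i, ψ.R i) × (∀ i, ψ.R i)),
      φ.probEq₂ J1 J2 x.1 x.2 * ψ.probEq₂ J1 J2 y.1 y.2 =
        φ.probEq J1 x.1 * φ.probEq J2 x.2 * (ψ.probEq J1 y.1 * ψ.probEq J2 y.2) := by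
    intro x y
    have := h (fun i => (x.1 i, y.1 i)) (fun i => (x.2 i, y.2 i))
    rw [tensor_probEq₂, tensor_probEq, tensor_probEq] at this
    rw [this]
    ring
  have key := eq_of_forall_mul_eq_mul hfactor
    (by rw [Fintype.sum_prod_type, Fintype.sum_prod_type, hsum, ← sum_mul_sum,
      sum_probEq _ _ (ψ.X · ξ), sum_probEq _ _ (ψ.X · ξ)])
    (by
      rw [Fintype.sum_prod_type, hsum]
      exact_mod_cast mul_ne_zero (card_agreeOn_ne_zero _ _) (card_agreeOn_ne_zero _ _))
  exact fun x y => congrFun key (x, y)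

lemma exists_mem_Kconn_contests {J1 J2 : Set I} (h : ¬ φ.Respects J1 J2) :
    ∃ A ∈ φ.Kconn, Contests A J1 J2 := by
  obtain ⟨B, -, hB⟩ := Finite.exists_le_minimal
    (p := fun B => B ⊆ J1 ∪ J2 ∧ ¬ φ.Respects (B ∩ J1) (B ∩ J2)) (a := J1 ∪ J2)
    ⟨subset_rfl, by rwa [Set.union_inter_cancel_left, Set.union_inter_cancel_right]⟩
  obtain ⟨hBJ, hBr⟩ := hB.prop
  have hresp : ∀ B' ⊂ B, φ.Respects (B' ∩ J1) (B' ∩ J2) := fun B' hB' =>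
    not_not.mp fun h' => hB.not_prop_of_lt hB' ⟨hB'.subset.trans hBJ, h'⟩
  have hsplit : ∀ B' ⊆ J1 ∪ J2, B' ∩ J1 ∪ B' ∩ J2 = B' := fun B' hB' => by
    rw [← Set.inter_union_distrib_left, Set.inter_eq_left.mpr hB']
  refine ⟨B, ?_, hBJ, ?_, ?_⟩
  · rintro B1 B2 ⟨hB1, hB2, hB12, rfl⟩ h12
    have h1 := hresp B1 <| Set.ssubset_union_left_iff.mpr fun h =>
      hB2.ne_empty (disjoint_self.mp (hB12.mono_left h))
    have h2 := hresp B2 <| Set.ssubset_union_right_iff.mpr fun h =>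
      hB1.ne_empty (disjoint_self.mp (hB12.mono_right h))
    rw [← hsplit B1 (Set.subset_union_left.trans hBJ),
      ← hsplit B2 (Set.subset_union_right.trans hBJ)] at h12 hB12
    apply hBr
    rw [Set.union_inter_distrib_right, Set.union_inter_distrib_right]
    exact h12.union_union hB12 h1 h2
  · rw [Set.nonempty_iff_ne_empty]
    intro h0
    exact hBr (h0 ▸ respects_empty φ _)
  · rw [Set.nonempty_iff_ne_empty]
    intro h0
    exact hBr (h0 ▸ (respects_empty φ _).symm)

end RandomFamily

theorem stmt16_general {I : Type u} [Fintype I] (𝒦₁ 𝒦₂ : Set (Set I))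
    (h₂ : IsConnectivity 𝒦₂) (φ ψ : RandomFamily I)
    (hφ₁ : 𝒦₁ ⊆ φ.Kconn) (hφ₂ : φ.Kconn ⊆ 𝒦₂)
    (hψ₂ : ψ.Kconn ⊆ 𝒦₂) :
    𝒦₁ ⊆ (φ.tensor ψ).Kconn ∧ (φ.tensor ψ).Kconn ⊆ 𝒦₂ := by
  refine ⟨fun J hJ J1 J2 hd h => hφ₁ hJ J1 J2 hd (h.of_tensor_left hd.2.2.1), fun J hJ => ?_⟩
  refine h₂.gamma_subset fun J1 J2 hd => ?_
  by_cases hφ : φ.Respects J1 J2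
  · obtain ⟨A, hA, hc⟩ :=
      RandomFamily.exists_mem_Kconn_contests fun hψ => hJ J1 J2 hd (hφ.tensor hψ)
    exact ⟨A, hψ₂ hA, hc⟩
  · obtain ⟨A, hA, hc⟩ := RandomFamily.exists_mem_Kconn_contests hφ
    exact ⟨A, hφ₂ hA, hc⟩

/-- if `𝒦₁ ⊆ K_φ ⊆ 𝒦₂` and `𝒦₁ ⊆ K_ψ ⊆ 𝒦₂` for integral connectivity
structures `𝒦₁, 𝒦₂`, then `𝒦₁ ⊆ K_{φ⊗ψ} ⊆ 𝒦₂`. -/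
theorem stmt16 {I : Type u} [Fintype I] [Nonempty I] (𝒦₁ 𝒦₂ : Set (Set I))
    (h₁ : IsConnectivity 𝒦₁) (h₂ : IsConnectivity 𝒦₂) (φ ψ : RandomFamily I)
    (hφ₁ : 𝒦₁ ⊆ φ.Kconn) (hφ₂ : φ.Kconn ⊆ 𝒦₂)
    (hψ₁ : 𝒦₁ ⊆ ψ.Kconn) (hψ₂ : ψ.Kconn ⊆ 𝒦₂) :
    𝒦₁ ⊆ (φ.tensor ψ).Kconn ∧ (φ.tensor ψ).Kconn ⊆ 𝒦₂ :=
  stmt16_general 𝒦₁ 𝒦₂ h₂ φ ψ hφ₁ hφ₂ hψ₂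
end
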